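/- Let $\Lambda$ be the 1-periodic hat function with $\Lambda(0) = \Lambda(1) = -1$, $\Lambda(1/2) = 1$, fix $\bar u \in \mathbb{R}$ and $\tilde\epsilon > 0$, and for $N \in \mathbb{N}$ let $\nu^{1/N}$ be the law of $m(\bar u) + \Lambda(N(\bar u + \delta))$ where $\delta \sim \mathcal{U}([-\tilde\epsilon, \tilde\epsilon])$. Let $\mu = \mathcal{U}([m(\bar u)-1, m(\bar u)+1])$. Then there exists a constant $C > 0$ (depending on $\tilde\epsilon$ but not on $N$) such that $(1 - C/N)\,\mu \le \nu^{1/N} \le (1 + C/N)\,\mu$ as measures. -/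

import Mathlib

open MeasureTheory Set
open scoped NNReal ENNReal

/-- The 1-periodic extension of the hat function with `Λ 0 = Λ 1 = -1` and
`Λ (1/2) = 1`, piecewise linear in between. -/
noncomputable def hatΛ (x : ℝ) : ℝ := 1 - 4 * |Int.fract x - 1 / 2|

/-- The law of `m(ū) + Λ(N (ū + δ))` with `δ ~ U([-ε̃, ε̃])`. -/
noncomputable def perturbedLaw (m : ℝ → ℝ) (ubar ε : ℝ) (N : ℕ) : Measure ℝ :=
  Measure.map (fun δ => m ubar + hatΛ ((N : ℝ) * (ubar + δ)))
    ((ENNReal.ofReal (2 * ε))⁻¹ • volume.restrict (Icc (-ε) ε))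

/-- The uniform probability measure on `[m(ū) - 1, m(ū) + 1]`. -/
noncomputable def uniformLaw (m : ℝ → ℝ) (ubar : ℝ) : Measure ℝ :=
  (ENNReal.ofReal 2)⁻¹ • volume.restrict (Icc (m ubar - 1) (m ubar + 1))

lemma hatΛ_measurable : Measurable hatΛ :=
  measurable_const.sub (((measurable_fract.sub measurable_const).abs).const_mul 4)

lemma hatΛ_int_add (x : ℝ) (k : ℤ) : hatΛ (x + k) = hatΛ x := by
  simp [hatΛ, Int.fract_add_intCast]

lemma hatΛ_left {x : ℝ} (h0 : 0 ≤ x) (h1 : x < 1/2) : hatΛ x = 4*x - 1 := by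
  rw [hatΛ, Int.fract_eq_self.2 ⟨h0, by linarith⟩, abs_of_nonpos (by linarith)]
  ring

lemma hatΛ_right {x : ℝ} (h0 : 1/2 ≤ x) (h1 : x < 1) : hatΛ x = 3 - 4*x := by
  rw [hatΛ, Int.fract_eq_self.2 ⟨by linarith, h1⟩, abs_of_nonneg (by linarith)]
  ring

lemma vol_inter_Icc_eq_Ico (B : Set ℝ) :
    volume (B ∩ Icc (-1:ℝ) 1) = volume (B ∩ Ico (-1:ℝ) 1) := by
  apply le_antisymm
  · calc volume (B ∩ Icc (-1:ℝ) 1) ≤ volume ((B ∩ Ico (-1:ℝ) 1) ∪ {1}) := by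
          apply measure_mono
          rintro x ⟨hxB, hx1, hx2⟩
          rcases hx2.lt_or_eq with h | h
          · exact Or.inl ⟨hxB, hx1, h⟩
          · exact Or.inr h
      _ ≤ volume (B ∩ Ico (-1:ℝ) 1) + volume ({1} : Set ℝ) := measure_union_le _ _
      _ = volume (B ∩ Ico (-1:ℝ) 1) := by simp
  · exact measure_mono (inter_subset_inter_right _ Ico_subset_Icc_self)

lemma vol_inter_Icc_eq_Ioc (B : Set ℝ) :
    volume (B ∩ Icc (-1:ℝ) 1) = volume (B ∩ Ioc (-1:ℝ) 1) := by
  apply le_antisymm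
  · calc volume (B ∩ Icc (-1:ℝ) 1) ≤ volume ((B ∩ Ioc (-1:ℝ) 1) ∪ {-1}) := by
          apply measure_mono
          rintro x ⟨hxB, hx1, hx2⟩
          rcases hx1.lt_or_eq with h | h
          · exact Or.inl ⟨hxB, h, hx2⟩
          · exact Or.inr h.symm
      _ ≤ volume (B ∩ Ioc (-1:ℝ) 1) + volume ({-1} : Set ℝ) := measure_union_le _ _
      _ = volume (B ∩ Ioc (-1:ℝ) 1) := by simp
  · exact measure_mono (inter_subset_inter_right _ Ioc_subset_Icc_self)

/-- Measure of the hat preimage over one fundamental period. -/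
lemma vol_hat_preimage (B : Set ℝ) (hB : MeasurableSet B) :
    volume (hatΛ ⁻¹' B ∩ Ico (0:ℝ) 1)
      = ENNReal.ofReal (1/2) * volume (B ∩ Icc (-1:ℝ) 1) := by
  have e1 : hatΛ ⁻¹' B ∩ Ico (0:ℝ) (1/2) =
      (fun x : ℝ => (4:ℝ)*x) ⁻¹' ((fun y : ℝ => y + (-1)) ⁻¹' (B ∩ Ico (-1:ℝ) 1)) := by
    ext x
    simp only [mem_inter_iff, mem_preimage, mem_Ico]
    constructor
    · rintro ⟨hxB, h0, h1⟩
      rw [hatΛ_left h0 h1] at hxB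
      have e : (4:ℝ)*x + (-1) = 4*x - 1 := by ring
      rw [e]
      exact ⟨hxB, by linarith, by linarith⟩
    · rintro ⟨hxB, h1, h2⟩
      have h0 : 0 ≤ x := by linarith
      have h1' : x < 1/2 := by linarith
      have e : (4:ℝ)*x + (-1) = 4*x - 1 := by ring
      rw [e] at hxB
      exact ⟨by rw [hatΛ_left h0 h1']; exact hxB, h0, h1'⟩
  have e2 : hatΛ ⁻¹' B ∩ Ico (1/2:ℝ) 1 =
      (fun x : ℝ => (-4:ℝ)*x) ⁻¹' ((fun y : ℝ => y + 3) ⁻¹' (B ∩ Ioc (-1:ℝ) 1)) := by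
    ext x
    simp only [mem_inter_iff, mem_preimage, mem_Ioc]
    constructor
    · rintro ⟨hxB, h0, h1⟩
      rw [hatΛ_right h0 h1] at hxB
      have e : (-4:ℝ)*x + 3 = 3 - 4*x := by ring
      rw [e]
      exact ⟨hxB, by linarith, by linarith⟩
    · rintro ⟨hxB, h1, h2⟩
      have h0 : 1/2 ≤ x := by linarith
      have h1' : x < 1 := by linarith
      have e : (-4:ℝ)*x + 3 = 3 - 4*x := by ring
      rw [e] at hxB
      exact ⟨by rw [hatΛ_right h0 h1']; exact hxB, h0, h1'⟩
  have hsplit : hatΛ ⁻¹' B ∩ Ico (0:ℝ) 1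
      = (hatΛ ⁻¹' B ∩ Ico (0:ℝ) (1/2)) ∪ (hatΛ ⁻¹' B ∩ Ico (1/2:ℝ) 1) := by
    rw [← inter_union_distrib_left, Ico_union_Ico_eq_Ico (by norm_num) (by norm_num)]
  have hdisj : Disjoint (hatΛ ⁻¹' B ∩ Ico (0:ℝ) (1/2)) (hatΛ ⁻¹' B ∩ Ico (1/2:ℝ) 1) :=
    ((by rw [Set.Ico_disjoint_Ico]; norm_num : Disjoint (Ico (0:ℝ) (1/2)) (Ico (1/2:ℝ) 1))).mono
      inter_subset_right inter_subset_right
  have hmB : MeasurableSet (hatΛ ⁻¹' B) := hatΛ_measurable hB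
  rw [hsplit, measure_union hdisj (hmB.inter measurableSet_Ico), e1, e2]
  rw [Real.volume_preimage_mul_left (by norm_num : (4:ℝ) ≠ 0),
      Real.volume_preimage_mul_left (by norm_num : (-4:ℝ) ≠ 0),
      measure_preimage_add_right, measure_preimage_add_right,
      ← vol_inter_Icc_eq_Ico, ← vol_inter_Icc_eq_Ioc]
  rw [← add_mul, ← ENNReal.ofReal_add (by positivity) (by positivity)]
  norm_num [abs_of_nonneg]

/-- Measure of the hat preimage over any integer-shifted period. -/
lemma vol_hat_preimage_shift (B : Set ℝ) (hB : MeasurableSet B) (d : ℤ) :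
    volume (hatΛ ⁻¹' B ∩ Ico (d:ℝ) ((d:ℝ)+1))
      = ENNReal.ofReal (1/2) * volume (B ∩ Icc (-1:ℝ) 1) := by
  have e : hatΛ ⁻¹' B ∩ Ico (d:ℝ) ((d:ℝ)+1)
      = (fun x : ℝ => x + (-(d:ℝ))) ⁻¹' (hatΛ ⁻¹' B ∩ Ico (0:ℝ) 1) := by
    ext x
    simp only [mem_inter_iff, mem_preimage, mem_Ico]
    have hper : hatΛ (x + (-(d:ℝ))) = hatΛ x := by
      have h := hatΛ_int_add (x + (-(d:ℝ))) d
      rw [show x + (-(d:ℝ)) + (d:ℝ) = x by ring] at h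
      exact h.symm
    constructor
    · rintro ⟨hxB, h1, h2⟩
      exact ⟨by rw [hper]; exact hxB, by linarith, by linarith⟩
    · rintro ⟨hxB, h1, h2⟩
      rw [hper] at hxB
      exact ⟨hxB, by linarith, by linarith⟩
  rw [e, measure_preimage_add_right, vol_hat_preimage B hB]

/-- Measure of one full period of the scaled hat preimage. -/
lemma vol_scaled_period (B : Set ℝ) (hB : MeasurableSet B) (ubar n : ℝ) (hn : 0 < n) (d : ℤ) :
    volume ((fun δ : ℝ => n * (ubar + δ)) ⁻¹' (hatΛ ⁻¹' B ∩ Ico (d:ℝ) ((d:ℝ)+1)))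
      = ENNReal.ofReal n⁻¹ * (ENNReal.ofReal (1/2) * volume (B ∩ Icc (-1:ℝ) 1)) := by
  have e : (fun δ : ℝ => n * (ubar + δ)) ⁻¹' (hatΛ ⁻¹' B ∩ Ico (d:ℝ) ((d:ℝ)+1))
      = (fun δ : ℝ => ubar + δ) ⁻¹' ((fun x : ℝ => n * x) ⁻¹' (hatΛ ⁻¹' B ∩ Ico (d:ℝ) ((d:ℝ)+1))) :=
    rfl
  rw [e, measure_preimage_add, Real.volume_preimage_mul_left hn.ne',
      vol_hat_preimage_shift B hB d, abs_inv, abs_of_pos hn]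

lemma ofReal_shuffle2 (a b : ℝ) (s : ℝ≥0∞) (ha : 0 ≤ a) :
    ENNReal.ofReal a * (ENNReal.ofReal b * s) = ENNReal.ofReal (a*b) * s := by
  rw [← mul_assoc, ← ENNReal.ofReal_mul ha]

lemma ofReal_shuffle4 (a b c d : ℝ) (s : ℝ≥0∞) (ha : 0 ≤ a) (hb : 0 ≤ b) (hc : 0 ≤ c) :
    ENNReal.ofReal a * (ENNReal.ofReal b * (ENNReal.ofReal c * (ENNReal.ofReal d * s)))
      = ENNReal.ofReal (a*b*c*d) * s := by
  rw [ofReal_shuffle2 c d s hc, ofReal_shuffle2 b (c*d) s hb, ofReal_shuffle2 a (b*(c*d)) s ha,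
      mul_assoc, mul_assoc]

/-- There is a constant `C` (depending on `ε̃` but not on `N`)
such that `(1 - C/N) μ ≤ ν^{1/N} ≤ (1 + C/N) μ` as measures, where `ν^{1/N}` is
the law of `m(ū) + Λ(N(ū + δ))`, `δ ~ U([-ε̃, ε̃])`, and `μ` is the uniform
distribution on `[m(ū)-1, m(ū)+1]`. -/
theorem perturbed_law_sandwiched_by_uniform
    (m : ℝ → ℝ) (ubar ε : ℝ) (hε : 0 < ε) :
    ∃ C > 0, ∀ N : ℕ, 1 ≤ N → ∀ A : Set ℝ, MeasurableSet A →
      ENNReal.ofReal (1 - C / N) * uniformLaw m ubar A ≤ perturbedLaw m ubar ε N A ∧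
        perturbedLaw m ubar ε N A ≤ ENNReal.ofReal (1 + C / N) * uniformLaw m ubar A := by
  refine ⟨ε⁻¹, inv_pos.2 hε, ?_⟩
  intro N hN A hA
  set n : ℝ := (N:ℝ) with hn_def
  have hn1 : (1:ℝ) ≤ n := by rw [hn_def]; exact_mod_cast hN
  have hn : (0:ℝ) < n := by linarith
  set B : Set ℝ := (fun t => m ubar + t) ⁻¹' A with hB_def
  have hB : MeasurableSet B := hA.preimage (measurable_const.add measurable_id)
  set s : ℝ≥0∞ := volume (B ∩ Icc (-1:ℝ) 1) with hs_def
  -- value of the uniform law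
  have hμ : uniformLaw m ubar A = ENNReal.ofReal (1/2) * s := by
    rw [uniformLaw, Measure.smul_apply, Measure.restrict_apply hA, smul_eq_mul]
    have h1 : ((ENNReal.ofReal 2)⁻¹ : ℝ≥0∞) = ENNReal.ofReal (1/2) := by
      rw [← ENNReal.ofReal_inv_of_pos two_pos]; norm_num
    have h2 : B ∩ Icc (-1:ℝ) 1
        = (fun t => m ubar + t) ⁻¹' (A ∩ Icc (m ubar - 1) (m ubar + 1)) := by
      ext t
      simp only [hB_def, mem_inter_iff, mem_preimage, mem_Icc]
      constructor
      · rintro ⟨h1, h2, h3⟩; exact ⟨h1, by linarith, by linarith⟩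
      · rintro ⟨h1, h2, h3⟩; exact ⟨h1, by linarith, by linarith⟩
    rw [h1, hs_def, h2, measure_preimage_add]
  -- value of the perturbed law
  set f₀ : ℝ → ℝ := fun δ => hatΛ (n * (ubar + δ)) with hf₀
  have hf₀m : Measurable f₀ :=
    hatΛ_measurable.comp (measurable_const.mul (measurable_const.add measurable_id))
  set T : Set ℝ := f₀ ⁻¹' B with hT
  have hTm : MeasurableSet T := hf₀m hB
  have hfm : Measurable (fun δ => m ubar + hatΛ (n * (ubar + δ))) :=
    measurable_const.add hf₀m
  have hν : perturbedLaw m ubar ε N A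
      = (ENNReal.ofReal (2*ε))⁻¹ * volume (T ∩ Icc (-ε) ε) := by
    rw [perturbedLaw, Measure.map_smul, Measure.smul_apply, smul_eq_mul,
        Measure.map_apply hfm hA, Measure.restrict_apply (hfm hA)]
    rfl
  set g : ℝ → ℝ := fun δ => n * (ubar + δ) with hg
  have hgm : Measurable g := measurable_const.mul (measurable_const.add measurable_id)
  have key : ∀ d : ℤ, volume (T ∩ g ⁻¹' (Ico (d:ℝ) ((d:ℝ)+1)))
      = ENNReal.ofReal n⁻¹ * (ENNReal.ofReal (1/2) * s) := by
    intro d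
    have e : T ∩ g ⁻¹' (Ico (d:ℝ) ((d:ℝ)+1))
        = g ⁻¹' (hatΛ ⁻¹' B ∩ Ico (d:ℝ) ((d:ℝ)+1)) := rfl
    rw [e]
    exact vol_scaled_period B hB ubar n hn d
  -- counting periods
  set c : ℤ := ⌈n * (ubar - ε)⌉ with hc
  have hc1 : n*(ubar-ε) ≤ (c:ℝ) := Int.le_ceil _
  have hc2 : (c:ℝ) < n*(ubar-ε) + 1 := by
    have := Int.ceil_lt_add_one (n*(ubar-ε)); exact_mod_cast this
  set K : ℕ := (⌊n*(ubar+ε)⌋ - c).toNat with hK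
  have hfl1 : ((⌊n*(ubar+ε)⌋ : ℤ) : ℝ) ≤ n*(ubar+ε) := Int.floor_le _
  have hfl2 : n*(ubar+ε) < ((⌊n*(ubar+ε)⌋ : ℤ) : ℝ) + 1 := Int.lt_floor_add_one _
  have hK1 : 2*ε*n - 2 ≤ (K:ℝ) := by
    have h1 : ((⌊n*(ubar+ε)⌋ - c : ℤ):ℝ) ≤ ((K:ℕ):ℝ) := by
      exact_mod_cast Int.self_le_toNat _
    push_cast at h1
    linarith
  have hK2 : (K:ℝ) ≤ 2*ε*n := by
    rcases le_or_gt (⌊n*(ubar+ε)⌋ - c) 0 with h | h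
    · have hK0 : K = 0 := by rw [hK]; omega
      rw [hK0]
      push_cast
      nlinarith
    · have h1 : ((K:ℕ):ℝ) = ((⌊n*(ubar+ε)⌋ - c : ℤ):ℝ) := by
        rw [hK]; exact_mod_cast congrArg Int.cast (Int.toNat_of_nonneg h.le)
      rw [h1]
      push_cast
      linarith
  -- per-period values in the form needed below
  have term_lower : ∀ j : ℕ, volume (T ∩ g ⁻¹' Ico ((c:ℝ)+j) ((c:ℝ)+j+1))
      = ENNReal.ofReal n⁻¹ * (ENNReal.ofReal (1/2) * s) := by
    intro j
    have e : Ico ((c:ℝ)+j) ((c:ℝ)+j+1)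
        = Ico (((c + (j:ℤ) : ℤ)):ℝ) ((((c + (j:ℤ) : ℤ)):ℝ)+1) := by push_cast; ring_nf
    rw [e]; exact key _
  have term_upper : ∀ j : ℕ, volume (T ∩ g ⁻¹' Ico ((c:ℝ)+j-1) ((c:ℝ)+j-1+1))
      = ENNReal.ofReal n⁻¹ * (ENNReal.ofReal (1/2) * s) := by
    intro j
    have e : Ico ((c:ℝ)+j-1) ((c:ℝ)+j-1+1)
        = Ico (((c + (j:ℤ) - 1 : ℤ)):ℝ) ((((c + (j:ℤ) - 1 : ℤ)):ℝ)+1) := by push_cast; ring_nf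
    rw [e]; exact key _
  -- lower bound on the restricted volume
  have hlow : (K : ℝ≥0∞) * (ENNReal.ofReal n⁻¹ * (ENNReal.ofReal (1/2) * s))
      ≤ volume (T ∩ Icc (-ε) ε) := by
    have hdisj : (↑(Finset.range K) : Set ℕ).PairwiseDisjoint
        (fun j : ℕ => T ∩ g ⁻¹' Ico ((c:ℝ)+j) ((c:ℝ)+j+1)) := by
      intro i _ j _ hij
      refine Disjoint.mono inter_subset_right inter_subset_right (Disjoint.preimage g ?_)
      rw [Set.Ico_disjoint_Ico]
      rcases hij.lt_or_gt with h | h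
      · have h' : (i:ℝ) + 1 ≤ j := by exact_mod_cast h
        calc min ((c:ℝ)+i+1) ((c:ℝ)+j+1) ≤ (c:ℝ)+i+1 := min_le_left _ _
          _ ≤ (c:ℝ)+j := by linarith
          _ ≤ max ((c:ℝ)+i) ((c:ℝ)+j) := le_max_right _ _
      · have h' : (j:ℝ) + 1 ≤ i := by exact_mod_cast h
        calc min ((c:ℝ)+i+1) ((c:ℝ)+j+1) ≤ (c:ℝ)+j+1 := min_le_right _ _
          _ ≤ (c:ℝ)+i := by linarith
          _ ≤ max ((c:ℝ)+i) ((c:ℝ)+j) := le_max_left _ _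
    have hmeas : ∀ j ∈ Finset.range K,
        MeasurableSet (T ∩ g ⁻¹' Ico ((c:ℝ)+j) ((c:ℝ)+j+1)) := fun j _ =>
      hTm.inter (hgm measurableSet_Ico)
    have hsum : volume (⋃ j ∈ Finset.range K, T ∩ g ⁻¹' Ico ((c:ℝ)+j) ((c:ℝ)+j+1))
        = (K : ℝ≥0∞) * (ENNReal.ofReal n⁻¹ * (ENNReal.ofReal (1/2) * s)) := by
      rw [measure_biUnion_finset hdisj hmeas]
      rw [Finset.sum_congr rfl (fun j _ => term_lower j), Finset.sum_const, nsmul_eq_mul,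
          Finset.card_range]
    rw [← hsum]
    apply measure_mono
    intro x hx
    simp only [mem_iUnion, Finset.mem_range, exists_prop] at hx
    obtain ⟨j, hj, hxT, hxg⟩ := hx
    have hxg' : (c:ℝ)+j ≤ n*(ubar+x) ∧ n*(ubar+x) < (c:ℝ)+j+1 := hxg
    refine ⟨hxT, ?_, ?_⟩
    · have h1 : n*(ubar-ε) ≤ n*(ubar+x) := by linarith [hxg'.1, hc1]
      have := (mul_le_mul_iff_right₀ hn).mp h1
      linarith
    · have hKpos : 0 < ⌊n*(ubar+ε)⌋ - c := by
        by_contra hcon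
        push_neg at hcon
        have : K = 0 := by rw [hK]; omega
        omega
      have hKeq : (K:ℝ) = ((⌊n*(ubar+ε)⌋ : ℤ):ℝ) - (c:ℝ) := by
        have : (K:ℤ) = ⌊n*(ubar+ε)⌋ - c := by rw [hK]; omega
        exact_mod_cast congrArg Int.cast this
      have hj' : (j:ℝ) + 1 ≤ (K:ℝ) := by exact_mod_cast hj
      have h1 : n*(ubar+x) < n*(ubar+ε) := by
        calc n*(ubar+x) < (c:ℝ)+j+1 := hxg'.2
          _ ≤ (c:ℝ) + K := by linarith
          _ = ((⌊n*(ubar+ε)⌋ : ℤ):ℝ) := by rw [hKeq]; ring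
          _ ≤ n*(ubar+ε) := hfl1
      have := (mul_lt_mul_iff_right₀ hn).mp h1
      linarith
  -- upper bound on the restricted volume
  have hupp : volume (T ∩ Icc (-ε) ε)
      ≤ ((K+2 : ℕ) : ℝ≥0∞) * (ENNReal.ofReal n⁻¹ * (ENNReal.ofReal (1/2) * s)) := by
    have cover : T ∩ Icc (-ε) ε
        ⊆ ⋃ j ∈ Finset.range (K+2), T ∩ g ⁻¹' Ico ((c:ℝ)+j-1) ((c:ℝ)+j-1+1) := by
      rintro x ⟨hxT, hx1, hx2⟩
      have hu1 : n*(ubar-ε) ≤ n*(ubar+x) := by nlinarith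
      have hu2 : n*(ubar+x) ≤ n*(ubar+ε) := by nlinarith
      set u : ℝ := n*(ubar+x) with hu
      set i : ℤ := ⌊u⌋ - c + 1 with hi
      have hfl3 : ((⌊u⌋ : ℤ):ℝ) ≤ u := Int.floor_le _
      have hfl4 : u < ((⌊u⌋ : ℤ):ℝ) + 1 := Int.lt_floor_add_one _
      have hi0 : 0 ≤ i := by
        have : (c:ℝ) < ((⌊u⌋ : ℤ):ℝ) + 2 := by linarith
        have : c < ⌊u⌋ + 2 := by exact_mod_cast this
        omega
      have hiK : i ≤ (K:ℤ) + 1 := by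
        have h1 : ⌊u⌋ ≤ ⌊n*(ubar+ε)⌋ := Int.floor_le_floor hu2
        have h2 : ⌊n*(ubar+ε)⌋ - c ≤ (K:ℤ) := Int.self_le_toNat _
        omega
      have hjlt : i.toNat < K + 2 := by omega
      refine mem_iUnion.2 ⟨i.toNat, mem_iUnion.2 ⟨Finset.mem_range.2 hjlt, hxT, ?_⟩⟩
      have hcast : ((i.toNat : ℕ):ℝ) = ((i:ℤ):ℝ) := by exact_mod_cast Int.toNat_of_nonneg hi0
      have hival : ((i:ℤ):ℝ) = ((⌊u⌋ : ℤ):ℝ) - (c:ℝ) + 1 := by rw [hi]; push_cast; ring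
      constructor
      · rw [hcast, hival]; show _ ≤ u; linarith
      · rw [hcast, hival]; show u < _; linarith
    calc volume (T ∩ Icc (-ε) ε)
        ≤ volume (⋃ j ∈ Finset.range (K+2), T ∩ g ⁻¹' Ico ((c:ℝ)+j-1) ((c:ℝ)+j-1+1)) :=
          measure_mono cover
      _ ≤ ∑ j ∈ Finset.range (K+2), volume (T ∩ g ⁻¹' Ico ((c:ℝ)+j-1) ((c:ℝ)+j-1+1)) :=
          measure_biUnion_finset_le _ _
      _ = ((K+2 : ℕ) : ℝ≥0∞) * (ENNReal.ofReal n⁻¹ * (ENNReal.ofReal (1/2) * s)) := by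
          rw [Finset.sum_congr rfl (fun j _ => term_upper j), Finset.sum_const, nsmul_eq_mul,
              Finset.card_range]
  -- assemble
  have h2ε : ((ENNReal.ofReal (2*ε))⁻¹ : ℝ≥0∞) = ENNReal.ofReal (2*ε)⁻¹ :=
    (ENNReal.ofReal_inv_of_pos (by positivity)).symm
  have hεne : ε ≠ 0 := hε.ne'
  have hnne : n ≠ 0 := hn.ne'
  constructor
  · -- lower bound
    rw [hμ, hν]
    refine le_trans ?_ (mul_le_mul_right hlow _)
    rcases le_or_gt (1 - ε⁻¹ / n) 0 with hneg | hpos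
    · rw [ENNReal.ofReal_eq_zero.2 hneg, zero_mul]
      exact zero_le
    · rw [h2ε, show ((K:ℕ) : ℝ≥0∞) = ENNReal.ofReal (K:ℝ) from (ENNReal.ofReal_natCast K).symm,
          ofReal_shuffle4 (2*ε)⁻¹ (K:ℝ) n⁻¹ (1/2) s (by positivity) (Nat.cast_nonneg K)
            (by positivity),
          ofReal_shuffle2 (1 - ε⁻¹/n) (1/2) s hpos.le]
      refine mul_le_mul_left (ENNReal.ofReal_le_ofReal ?_) s
      have h1 : (2*ε)⁻¹ * (K:ℝ) * n⁻¹ * (1/2) = (K:ℝ) * (ε⁻¹ * n⁻¹) / 4 := by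
        rw [mul_inv]; ring
      have h2 : (1 - ε⁻¹/n) * (1/2) = 1/2 - (ε⁻¹ * n⁻¹)/2 := by ring
      have h3 : (0:ℝ) < ε⁻¹ * n⁻¹ := by positivity
      have h4 := mul_le_mul_of_nonneg_right hK1 h3.le
      have h5 : (2*ε*n - 2)*(ε⁻¹*n⁻¹) = 2 - 2*(ε⁻¹*n⁻¹) := by field_simp
      rw [h1, h2]
      nlinarith [h4, h5]
  · -- upper bound
    rw [hμ, hν]
    refine le_trans (mul_le_mul_right hupp _) ?_
    rw [h2ε, show ((K+2 : ℕ) : ℝ≥0∞) = ENNReal.ofReal ((K:ℝ)+2) from by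
          rw [← ENNReal.ofReal_natCast (K+2)]; norm_num,
        ofReal_shuffle4 (2*ε)⁻¹ ((K:ℝ)+2) n⁻¹ (1/2) s (by positivity)
          (by linarith [Nat.cast_nonneg (α := ℝ) K]) (by positivity),
        ofReal_shuffle2 (1 + ε⁻¹/n) (1/2) s (by positivity)]
    refine mul_le_mul_left (ENNReal.ofReal_le_ofReal ?_) s
    have h1 : (2*ε)⁻¹ * ((K:ℝ)+2) * n⁻¹ * (1/2) = ((K:ℝ)+2) * (ε⁻¹ * n⁻¹) / 4 := by
      rw [mul_inv]; ring
    have h2 : (1 + ε⁻¹/n) * (1/2) = 1/2 + (ε⁻¹ * n⁻¹)/2 := by ring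
    have h3 : (0:ℝ) < ε⁻¹ * n⁻¹ := by positivity
    have h4 := mul_le_mul_of_nonneg_right hK2 h3.le
    have h5 : 2*ε*n*(ε⁻¹*n⁻¹) = 2 := by field_simp
    rw [h1, h2]
    nlinarith [h4, h5]
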